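/- Let a, b, c > 0 with a < b and, for an integer k ≥ 1, define H_{a,b;c;k}(x) = ln c + ln Γ(x+a) − ln Γ(x+b) + Σ_{i=1}^{k} ((−1)^i x^i / i!)·[ψ^{(i−1)}(x+a) − ψ^{(i−1)}(x+b)] for x ≥ 0. Then H_{a,b;c;k} is (strictly) decreasing on (0,∞); moreover, if additionally c ≤ Γ(b)/Γ(a), then H_{a,b;c;k}(x) < 0 for every x > 0. -/

import Mathlib

/-
Let `T_k(t; z)` be the degree-`k` Taylor polynomial of `log Γ` at `t`, evaluated at `z`. Then
`H(x) = log c + T_k(x + a; a) - T_k(x + b; b)`, and differentiating a Taylor polynomial in its base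
point leaves only its top term, so `H'(x) = (-x)^k / k! · (ψ^{(k)}(x + a) - ψ^{(k)}(x + b))`.
Differentiating Euler's product for `Γ` termwise gives
`ψ^{(n+1)}(x) = (-1)^n (n+1)! ∑_j (x + j)^{-(n+2)}`, so `(-1)^k ψ^{(k)}` is strictly increasing
on `(0, ∞)` and `H' < 0` there. Hence `H` is strictly decreasing on `[0, ∞)`, and
`H(x) < H(0) = log c - log (Γ(b) / Γ(a)) ≤ 0`.
-/

open Real Finset

/-- The polygamma function `ψ^{(i)}`, the `i`-th derivative of the digamma
function `ψ = (log Γ)'`; in particular `polygamma 0 = ψ`. -/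
noncomputable def polygamma (i : ℕ) (x : ℝ) : ℝ :=
  iteratedDeriv (i + 1) (fun y : ℝ => Real.log (Real.Gamma y)) x

/-- The auxiliary function `H_{a,b;c;k}`. -/
noncomputable def H (a b c : ℝ) (k : ℕ) (x : ℝ) : ℝ :=
  Real.log c + Real.log (Real.Gamma (x + a)) - Real.log (Real.Gamma (x + b)) +
    ∑ i ∈ Finset.Icc 1 k,
      ((-1 : ℝ) ^ i * x ^ i / (Nat.factorial i : ℝ)) *
        (polygamma (i - 1) (x + a) - polygamma (i - 1) (x + b))

open Set Filter Topology
open scoped ContDiff Nat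

/-- The Hurwitz zeta function `ζ(m, x)`; the series only converges for `2 ≤ m` (else the `tsum`
is `0`). -/
noncomputable def hurwitzSeries (m : ℕ) (x : ℝ) : ℝ := ∑' j : ℕ, ((x + j) ^ m)⁻¹

theorem summable_inv_add_nat_pow {m : ℕ} (hm : 2 ≤ m) (x : ℝ) :
    Summable fun j : ℕ => ((x + j) ^ m)⁻¹ := by
  refine .of_norm <|
    ((summable_one_div_nat_add_rpow x m).2 (by exact_mod_cast hm)).congr fun j => ?_
  rw [norm_inv, norm_pow, norm_eq_abs, add_comm, rpow_natCast, one_div]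

theorem hurwitzSeries_pos {m : ℕ} (hm : 2 ≤ m) {x : ℝ} (hx : 0 < x) : 0 < hurwitzSeries m x :=
  (summable_inv_add_nat_pow hm x).tsum_pos (fun j => by positivity) 0 (by positivity)

theorem hasDerivAt_inv_add_pow (m : ℕ) {y p : ℝ} (hyp : y + p ≠ 0) :
    HasDerivAt (fun y => ((y + p) ^ m)⁻¹) (-m * ((y + p) ^ (m + 1))⁻¹) y := by
  have h := (hasDerivAt_zpow (-(m : ℤ)) (y + p) (Or.inl hyp)).comp_add_const y p
  simp only [zpow_neg, zpow_natCast] at h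
  refine h.congr_deriv ?_
  rw [show -(m : ℤ) - 1 = -((m + 1 : ℕ) : ℤ) by push_cast; ring, zpow_neg, zpow_natCast]
  push_cast; ring

theorem hasDerivAt_hurwitzSeries {m : ℕ} (hm : 2 ≤ m) {x : ℝ} (hx : 0 < x) :
    HasDerivAt (hurwitzSeries m) (-m * hurwitzSeries (m + 1) x) x := by
  have hpos : ∀ y ∈ Ioi (x / 2), ∀ j : ℕ, 0 < y + j := fun y (hy : x / 2 < y) j => by
    linarith [j.cast_nonneg (α := ℝ)]
  have hu := (summable_inv_add_nat_pow (m := m + 1) (by omega) (x / 2)).mul_left (m : ℝ)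
  have h := hasDerivAt_tsum_of_isPreconnected hu isOpen_Ioi isPreconnected_Ioi
    (fun j y hy => hasDerivAt_inv_add_pow m (hpos y hy j).ne') (fun j y hy => ?_)
    (by simpa using hx) (summable_inv_add_nat_pow hm x) (show x / 2 < x by linarith)
  · rwa [hurwitzSeries, ← tsum_mul_left]
  · have := hpos y hy j
    rw [norm_mul, norm_neg, Real.norm_natCast, norm_inv, norm_pow, norm_of_nonneg this.le]
    gcongr
    exact hy.le

/-- The logarithm of the factor `(1 + 1/p) ^ x / (1 + x/p)` of Euler's product for `x Γ(x)`. -/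
noncomputable def eulerLogTerm (x p : ℝ) : ℝ :=
  x * (log (p + 1) - log p) - (log (x + p) - log p)

theorem sum_range_eulerLogTerm (x : ℝ) (n : ℕ) :
    ∑ j ∈ range n, eulerLogTerm x (j + 1) =
      BohrMollerup.logGammaSeq x n + log x + x * (log (n + 1) - log n) := by
  induction n with
  | zero => simp [BohrMollerup.logGammaSeq]
  | succ n ih =>
    rw [sum_range_succ, ih]
    simp only [BohrMollerup.logGammaSeq, sum_range_succ _ (n + 1), Nat.factorial_succ,
      eulerLogTerm]
    push_cast
    rw [log_mul (by positivity) (by positivity)]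
    ring

theorem tendsto_sum_range_eulerLogTerm {x : ℝ} (hx : 0 < x) :
    Tendsto (fun n => ∑ j ∈ range n, eulerLogTerm x (j + 1)) atTop
      (𝓝 (log (Gamma x) + log x)) := by
  simp_rw [sum_range_eulerLogTerm x]
  simpa using ((BohrMollerup.tendsto_log_gamma hx).add_const (log x)).add
    (tendsto_log_nat_add_one_sub_log.const_mul x)

theorem abs_log_add_one_sub_log_sub_inv_le {p y : ℝ} (hp : 0 < p) (hy : 0 ≤ y) :
    |log (p + 1) - log p - (y + p)⁻¹| ≤ (1 + y) * (p ^ 2)⁻¹ := by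
  rw [← log_div (by positivity) hp.ne', abs_le]
  have hup : log ((p + 1) / p) ≤ p⁻¹ :=
    (log_le_sub_one_of_pos (by positivity)).trans_eq (by field_simp; ring)
  have hlow : (p + 1)⁻¹ ≤ log ((p + 1) / p) :=
    le_of_eq_of_le (by field_simp; ring) (one_sub_inv_le_log_of_pos (by positivity))
  have hw : p⁻¹ - (y + p)⁻¹ ≤ y * (p ^ 2)⁻¹ := by
    rw [inv_sub_inv hp.ne' (by positivity), div_le_iff₀ (by positivity)]
    field_simp
    nlinarith
  have hz : p⁻¹ - (p + 1)⁻¹ ≤ (p ^ 2)⁻¹ := by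
    rw [inv_sub_inv hp.ne' (by positivity), div_le_iff₀ (by positivity)]
    field_simp
    nlinarith
  have hv : (y + p)⁻¹ ≤ p⁻¹ := inv_anti₀ hp (by linarith)
  have hyp : 0 ≤ y * (p ^ 2)⁻¹ := by positivity
  constructor <;> linarith

theorem hasDerivAt_eulerLogTerm {y p : ℝ} (hyp : 0 < y + p) :
    HasDerivAt (fun y => eulerLogTerm y p) (log (p + 1) - log p - (y + p)⁻¹) y := by
  have h := ((hasDerivAt_mul_const (log (p + 1) - log p)).sub
    ((((hasDerivAt_id y).add_const p).log hyp.ne').sub_const (log p)))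
  exact h.congr_deriv (by simp [one_div])

theorem summable_inv_nat_add_one_sq : Summable fun j : ℕ => (((j : ℝ) + 1) ^ 2)⁻¹ :=
  (summable_inv_add_nat_pow le_rfl 1).congr fun j => by rw [add_comm]

theorem norm_log_add_one_sub_log_sub_inv_le {x y : ℝ} (j : ℕ) (hy : y ∈ Ioo 0 (x + 1)) :
    ‖log ((j : ℝ) + 1 + 1) - log (j + 1) - (y + (j + 1))⁻¹‖ ≤
      (2 + x) * (((j : ℝ) + 1) ^ 2)⁻¹ := by
  refine (abs_log_add_one_sub_log_sub_inv_le (by positivity) hy.1.le).trans ?_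
  exact mul_le_mul_of_nonneg_right (by linarith [hy.2]) (by positivity)

/- Every term vanishes at `x = 1`, and the derivatives are dominated uniformly on `(0, x + 1)`. -/
theorem summable_eulerLogTerm {x : ℝ} (hx : 0 < x) :
    Summable fun j : ℕ => eulerLogTerm x (j + 1) :=
  summable_of_summable_hasDerivAt_of_isPreconnected (y₀ := 1)
    (g := fun (j : ℕ) (y : ℝ) => eulerLogTerm y (j + 1))
    (g' := fun (j : ℕ) (y : ℝ) => log ((j : ℝ) + 1 + 1) - log (j + 1) - (y + (j + 1))⁻¹)
    (summable_inv_nat_add_one_sq.mul_left (2 + x)) isOpen_Ioo isPreconnected_Ioo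
    (fun j y hy => hasDerivAt_eulerLogTerm (by linarith [hy.1, j.cast_nonneg (α := ℝ)]))
    (fun j y hy => norm_log_add_one_sub_log_sub_inv_le j hy) ⟨one_pos, by linarith⟩
    (by simp [eulerLogTerm, add_comm]) ⟨hx, by linarith⟩

theorem hasSum_eulerLogTerm {x : ℝ} (hx : 0 < x) :
    HasSum (fun j : ℕ => eulerLogTerm x (j + 1)) (log (Gamma x) + log x) :=
  ((summable_eulerLogTerm hx).hasSum_iff_tendsto_nat).2 (tendsto_sum_range_eulerLogTerm hx)

/-- The termwise derivative in `x` of `∑_{p ≥ 1} eulerLogTerm x p - log x`. -/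
noncomputable def digammaSeries (x : ℝ) : ℝ :=
  ∑' j : ℕ, (log ((j : ℝ) + 1 + 1) - log (j + 1) - (x + (j + 1))⁻¹) - x⁻¹

theorem hasDerivAt_log_Gamma {x : ℝ} (hx : 0 < x) :
    HasDerivAt (fun y => log (Gamma y)) (digammaSeries x) x := by
  have hT := hasDerivAt_tsum_of_isPreconnected (y₀ := x)
    (g := fun (j : ℕ) (y : ℝ) => eulerLogTerm y (j + 1))
    (g' := fun (j : ℕ) (y : ℝ) => log ((j : ℝ) + 1 + 1) - log (j + 1) - (y + (j + 1))⁻¹)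
    (summable_inv_nat_add_one_sq.mul_left (2 + x)) isOpen_Ioo isPreconnected_Ioo
    (fun j y hy => hasDerivAt_eulerLogTerm (by linarith [hy.1, j.cast_nonneg (α := ℝ)]))
    (fun j y hy => norm_log_add_one_sub_log_sub_inv_le j hy) ⟨hx, by linarith⟩
    (summable_eulerLogTerm hx) ⟨hx, by linarith⟩
  refine (hT.sub (hasDerivAt_log hx.ne')).congr_of_eventuallyEq ?_
  filter_upwards [Ioi_mem_nhds hx] with y hy
  rw [Pi.sub_apply, (hasSum_eulerLogTerm hy).tsum_eq, add_sub_cancel_right]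

theorem hasDerivAt_digammaSeries {x : ℝ} (hx : 0 < x) :
    HasDerivAt digammaSeries (hurwitzSeries 2 x) x := by
  have hpos : ∀ y ∈ Ioi (0 : ℝ), ∀ j : ℕ, 0 < y + (j + 1) := fun y (hy : 0 < y) j => by
    positivity
  have hT := hasDerivAt_tsum_of_isPreconnected (y₀ := x)
    (g := fun (j : ℕ) (y : ℝ) => log ((j : ℝ) + 1 + 1) - log (j + 1) - (y + (j + 1))⁻¹)
    (g' := fun (j : ℕ) (y : ℝ) => ((y + (j + 1)) ^ 2)⁻¹)
    summable_inv_nat_add_one_sq isOpen_Ioi isPreconnected_Ioi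
    (fun j y hy => ?_) (fun j y hy => ?_) hx ?_ hx
  · refine (hT.sub (hasDerivAt_inv hx.ne')).congr_deriv ?_
    rw [hurwitzSeries, (summable_inv_add_nat_pow le_rfl x).tsum_eq_zero_add]
    push_cast
    ring_nf
  · simpa using (hasDerivAt_inv_add_pow 1 (hpos y hy j).ne').const_sub
      (log ((j : ℝ) + 1 + 1) - log (j + 1))
  · rw [norm_inv, norm_pow, norm_of_nonneg (hpos y hy j).le]
    have hy : (0 : ℝ) < y := hy
    exact inv_anti₀ (by positivity) (pow_le_pow_left₀ (by positivity) (by linarith) 2)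
  · exact .of_norm_bounded (summable_inv_nat_add_one_sq.mul_left (2 + x))
      fun j => norm_log_add_one_sub_log_sub_inv_le j ⟨hx, by linarith⟩

theorem contDiffOn_Gamma : ContDiffOn ℝ ∞ Gamma (Ioi 0) := by
  have hC : ContDiffOn ℂ ∞ Complex.Gamma {s : ℂ | 0 < s.re} :=
    DifferentiableOn.contDiffOn (fun s hs => (Complex.differentiableAt_Gamma s
      fun m h => by simp [h] at hs; linarith [m.cast_nonneg (α := ℝ)]).differentiableWithinAt)
      (isOpen_lt continuous_const Complex.continuous_re)
  have hR : ContDiffOn ℝ ∞ (fun x : ℝ => (Complex.Gamma x).re) (Ioi 0) :=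
    Complex.reCLM.contDiff.comp_contDiffOn
      ((hC.restrict_scalars ℝ).comp Complex.ofRealCLM.contDiff.contDiffOn fun x hx => by
        simpa using hx)
  exact hR.congr fun x _ => by simp [Complex.Gamma_ofReal]

theorem contDiffOn_log_Gamma : ContDiffOn ℝ ∞ (fun x => log (Gamma x)) (Ioi 0) :=
  contDiffOn_Gamma.log fun _ hx => (Gamma_pos_of_pos hx).ne'

theorem hasDerivAt_polygamma (i : ℕ) {x : ℝ} (hx : 0 < x) :
    HasDerivAt (polygamma i) (polygamma (i + 1) x) x := by
  have hdiff : DifferentiableAt ℝ (polygamma i) x := by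
    have h := (contDiffOn_log_Gamma.differentiableOn_iteratedDerivWithin (m := i + 1)
      (by exact_mod_cast WithTop.coe_lt_top _) (uniqueDiffOn_Ioi 0) x hx).differentiableAt
      (Ioi_mem_nhds hx)
    refine h.congr_of_eventuallyEq ?_
    filter_upwards [Ioi_mem_nhds hx] with y hy
    exact (iteratedDerivWithin_of_isOpen isOpen_Ioi hy).symm
  have hsucc : polygamma (i + 1) x = deriv (polygamma i) x := by
    rw [polygamma, iteratedDeriv_succ]; rfl
  exact hsucc ▸ hdiff.hasDerivAt

theorem polygamma_succ_eq_of_eqOn {i : ℕ} {f : ℝ → ℝ} {f' x : ℝ}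
    (hf : EqOn (polygamma i) f (Ioi 0)) (hx : 0 < x) (hf' : HasDerivAt f f' x) :
    polygamma (i + 1) x = f' :=
  (hasDerivAt_polygamma i hx).unique
    (hf'.congr_of_eventuallyEq (eventuallyEq_of_mem (Ioi_mem_nhds hx) hf))

theorem eqOn_polygamma_zero_digammaSeries : EqOn (polygamma 0) digammaSeries (Ioi 0) :=
  fun _ hx => by rw [polygamma, iteratedDeriv_one, (hasDerivAt_log_Gamma hx).deriv]

theorem polygamma_succ (n : ℕ) {x : ℝ} (hx : 0 < x) :
    polygamma (n + 1) x = (-1) ^ n * (n + 1)! * hurwitzSeries (n + 2) x := by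
  induction n generalizing x with
  | zero =>
    simpa using polygamma_succ_eq_of_eqOn eqOn_polygamma_zero_digammaSeries hx
      (hasDerivAt_digammaSeries hx)
  | succ n ih =>
    rw [polygamma_succ_eq_of_eqOn (fun y hy => ih hy) hx
      ((hasDerivAt_hurwitzSeries (by omega) hx).const_mul _), Nat.factorial_succ (n + 1)]
    push_cast
    ring

theorem strictMonoOn_neg_one_pow_mul_polygamma (k : ℕ) :
    StrictMonoOn (fun x => (-1) ^ k * polygamma k x) (Ioi 0) := by
  have hd (x : ℝ) (hx : 0 < x) :
      HasDerivAt (fun x => (-1) ^ k * polygamma k x) ((-1) ^ k * polygamma (k + 1) x) x :=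
    (hasDerivAt_polygamma k hx).const_mul _
  refine strictMonoOn_of_deriv_pos (convex_Ioi 0)
    (fun x hx => (hd x hx).continuousAt.continuousWithinAt) fun x hx => ?_
  rw [interior_Ioi] at hx
  rw [(hd x hx).deriv, polygamma_succ k hx, ← mul_assoc, ← mul_assoc, ← pow_add,
    Even.neg_one_pow ⟨k, rfl⟩, one_mul]
  exact mul_pos (by positivity) (hurwitzSeries_pos (by omega) hx)

theorem taylorWithinEval_log_Gamma (k : ℕ) {t : ℝ} (ht : 0 < t) (z : ℝ) :
    taylorWithinEval (fun x => log (Gamma x)) k (Ioi 0) t z =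
      log (Gamma t) + ∑ i ∈ Icc 1 k, (z - t) ^ i / i ! * polygamma (i - 1) t := by
  rw [taylor_within_apply, sum_range_succ', ← Finset.Ico_add_one_right_eq_Icc,
    sum_Ico_eq_sum_range, Nat.add_sub_cancel, add_comm]
  congr 1
  · simp
  · refine sum_congr rfl fun i _ => ?_
    rw [iteratedDerivWithin_of_isOpen isOpen_Ioi ht, smul_eq_mul, add_comm 1 i, polygamma,
      Nat.add_sub_cancel]
    ring

theorem hasDerivAt_taylorWithinEval_log_Gamma (k : ℕ) {t : ℝ} (ht : 0 < t) (z : ℝ) :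
    HasDerivAt (fun s => taylorWithinEval (fun x => log (Gamma x)) k (Ioi 0) s z)
      ((z - t) ^ k / k ! * polygamma k t) t := by
  have h := hasDerivWithinAt_taylorWithinEval (x := z) (n := k) (uniqueDiffOn_Ioi 0)
    self_mem_nhdsWithin ht subset_rfl (contDiffOn_log_Gamma.of_le (by exact_mod_cast le_top))
    ((contDiffOn_log_Gamma.differentiableOn_iteratedDerivWithin
      (by exact_mod_cast WithTop.coe_lt_top _) (uniqueDiffOn_Ioi 0)) t ht)
  rw [iteratedDerivWithin_of_isOpen isOpen_Ioi ht, smul_eq_mul] at h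
  exact (h.hasDerivAt (Ioi_mem_nhds ht)).congr_deriv (by unfold polygamma; ring)

theorem H_eq_taylorWithinEval (a b c : ℝ) (k : ℕ) {x : ℝ} (ha : 0 < x + a) (hb : 0 < x + b) :
    H a b c k x = log c + taylorWithinEval (fun x => log (Gamma x)) k (Ioi 0) (x + a) a -
      taylorWithinEval (fun x => log (Gamma x)) k (Ioi 0) (x + b) b := by
  have hx : ∀ z, z - (x + z) = -x := fun z => by ring
  simp only [taylorWithinEval_log_Gamma k ha, taylorWithinEval_log_Gamma k hb, H, hx, ← neg_pow,
    mul_sub, sum_sub_distrib]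
  ring

theorem neg_pow_div_factorial_mul_polygamma_sub_neg (k : ℕ) {x u v : ℝ} (hx : 0 < x)
    (hu : 0 < u) (huv : u < v) : (-x) ^ k / k ! * (polygamma k u - polygamma k v) < 0 := calc
  _ = x ^ k / k ! * ((-1) ^ k * polygamma k u - (-1) ^ k * polygamma k v) := by
    rw [neg_pow]; ring
  _ < 0 := mul_neg_of_pos_of_neg (by positivity) <| sub_neg.2 <|
    strictMonoOn_neg_one_pow_mul_polygamma k hu (hu.trans huv) huv

theorem hasDerivAt_H (a b c : ℝ) (k : ℕ) {x : ℝ} (ha : 0 < x + a) (hb : 0 < x + b) :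
    HasDerivAt (H a b c k) ((-x) ^ k / k ! * (polygamma k (x + a) - polygamma k (x + b))) x := by
  have hT := (((hasDerivAt_taylorWithinEval_log_Gamma k ha a).comp_add_const x a).sub
    ((hasDerivAt_taylorWithinEval_log_Gamma k hb b).comp_add_const x b)).const_add (log c)
  refine (hT.congr_of_eventuallyEq ?_).congr_deriv ?_
  · filter_upwards [eventually_gt_nhds (show -a < x by linarith),
      eventually_gt_nhds (show -b < x by linarith)] with y hya hyb
    rw [H_eq_taylorWithinEval a b c k (by linarith) (by linarith), Pi.sub_apply]
    ring
  · simp only [show ∀ z, z - (x + z) = -x from fun z => by ring]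
    ring

theorem H_zero (a b c : ℝ) (k : ℕ) : H a b c k 0 = log c + log (Gamma a) - log (Gamma b) := by
  rw [H, sum_eq_zero fun i hi => by rw [zero_pow (by simp at hi; omega)]; ring]
  simp

theorem strictAntiOn_H {a b : ℝ} (c : ℝ) (k : ℕ) (ha : 0 < a) (hab : a < b) :
    StrictAntiOn (H a b c k) (Ici 0) := by
  have hd (x : ℝ) (hx : 0 ≤ x) := hasDerivAt_H a b c k (x := x) (by linarith) (by linarith)
  refine strictAntiOn_of_deriv_neg (convex_Ici 0)
    (fun x hx => (hd x hx).continuousAt.continuousWithinAt) fun x hx => ?_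
  rw [interior_Ici] at hx
  rw [(hd x (le_of_lt hx)).deriv]
  exact neg_pow_div_factorial_mul_polygamma_sub_neg k hx (by linarith [mem_Ioi.1 hx])
    (by linarith)

theorem stmt_7_general (a b c : ℝ) (ha : 0 < a) (hc : 0 < c)
    (hab : a < b) (k : ℕ) :
    StrictAntiOn (H a b c k) (Set.Ioi (0 : ℝ)) ∧
      (c ≤ Real.Gamma b / Real.Gamma a → ∀ x : ℝ, 0 < x → H a b c k x < 0) := by
  have hanti := strictAntiOn_H c k ha hab
  refine ⟨hanti.mono Ioi_subset_Ici_self, fun hcle x hx => ?_⟩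
  have hlog : log c ≤ log (Gamma b) - log (Gamma a) := by
    rw [← log_div (Gamma_pos_of_pos (ha.trans hab)).ne' (Gamma_pos_of_pos ha).ne']
    exact log_le_log hc hcle
  calc H a b c k x < H a b c k 0 := hanti self_mem_Ici hx.le hx
    _ ≤ 0 := by rw [H_zero]; linarith

theorem stmt_7 (a b c : ℝ) (ha : 0 < a) (hb : 0 < b) (hc : 0 < c)
    (hab : a < b) (k : ℕ) (hk : 1 ≤ k) :
    StrictAntiOn (H a b c k) (Set.Ioi (0 : ℝ)) ∧
      (c ≤ Real.Gamma b / Real.Gamma a → ∀ x : ℝ, 0 < x → H a b c k x < 0) :=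
  stmt_7_general a b c ha hc hab k
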